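/- Let m ≥ 1 and let k1, k2, κ, m12 be integers with 0 ≤ k2 ≤ k1 ≤ κ ≤ m12 − 2. Set n1 = m·m12 − k1, n2 = m·m12 − k2 and n' = m·m12 − κ. Then there exist a tensor T : Fin 2 → Fin n1 → Fin n2 → ℂ and matrices X1 ∈ Matrix (Fin n') (Fin n1) ℂ, X2 ∈ Matrix (Fin n') (Fin n2) ℂ such that the binary form f(x,y) = det( x • (X1 * (T 0) * X2ᵀ) + y • (X1 * (T 1) * X2ᵀ) ) admits NO factorization f = (∏_{i=1}^m ℓ_i^{m12−κ}) · g with ℓ_1, …, ℓ_m binary linear forms and g a homogeneous binary form of degree (m−1)·κ. In particular, TNS(m,m12,m; 2,n1,n2) is a proper subset of the space of all tensors Fin 2 → Fin n1 → Fin n2 → ℂ. -/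

import Mathlib

open scoped BigOperators

noncomputable section

/-- Parametrized triangle tensor network tensors. -/
def tnsSet (m01 m12 m02 n0 n1 n2 : ℕ) :
    Set (Fin n0 → Fin n1 → Fin n2 → ℂ) :=
  {T | ∃ (X0 : Fin n0 → Fin m01 × Fin m02 → ℂ)
        (X1 : Fin n1 → Fin m01 × Fin m12 → ℂ)
        (X2 : Fin n2 → Fin m12 × Fin m02 → ℂ),
      ∀ a b c, T a b c =
        ∑ i : Fin m01, ∑ j : Fin m12, ∑ k : Fin m02,
          X0 a (i, k) * X1 b (i, j) * X2 c (j, k)}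

/-- The triangle tensor network variety: Euclidean closure of the parametrized set. -/
def TNS (m01 m12 m02 n0 n1 n2 : ℕ) : Set (Fin n0 → Fin n1 → Fin n2 → ℂ) :=
  closure (tnsSet m01 m12 m02 n0 n1 n2)

/-- The vanishing ideal of a subset of an affine space over ℂ. -/
def vanishingIdeal' {ι : Type*} (Z : Set (ι → ℂ)) : Ideal (MvPolynomial ι ℂ) where
  carrier := {p | ∀ z ∈ Z, MvPolynomial.eval z p = 0}
  zero_mem' := by intro z _; simp
  add_mem' := by
    intro a b ha hb z hz
    simp [map_add, ha z hz, hb z hz]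
  smul_mem' := by
    intro c a ha z hz
    simp [smul_eq_mul, ha z hz]

/-- Affine dimension of a set of coordinate tensors. -/
def affineDim {n0 n1 n2 : ℕ} (Z : Set (Fin n0 → Fin n1 → Fin n2 → ℂ)) : WithBot ℕ∞ :=
  ringKrullDim (MvPolynomial (Fin n0 × Fin n1 × Fin n2) ℂ ⧸
    vanishingIdeal' ((fun T (p : Fin n0 × Fin n1 × Fin n2) => T p.1 p.2.1 p.2.2) '' Z))


/-- The binary form `det(x · X1 (T 0) X2ᵀ + y · X1 (T 1) X2ᵀ)`. -/
def pencilDet {n n1 n2 : ℕ} (T : Fin 2 → Fin n1 → Fin n2 → ℂ)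
    (X1 : Matrix (Fin n) (Fin n1) ℂ) (X2 : Matrix (Fin n) (Fin n2) ℂ) :
    MvPolynomial (Fin 2) ℂ :=
  Matrix.det (Matrix.of fun u v : Fin n =>
    MvPolynomial.X 0 * MvPolynomial.C ((X1 * Matrix.of (T 0) * X2.transpose) u v)
      + MvPolynomial.X 1 * MvPolynomial.C ((X1 * Matrix.of (T 1) * X2.transpose) u v))

/-!
The witness is the tensor `T` with diagonal slices `T 0 = I` and `T 1 = diag(0, 1, 2, …)`.
Truncated to its leading `n' × n'` block, its pencil has determinant `∏ u, (x + u y)`, a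
product of pairwise non-proportional linear forms; being squarefree, it has no factor
`ℓ ^ (m12 - κ)` since `m12 - κ ≥ 2`.

For a tensor of the triangle network with outer bond dimensions `m`, the pencil
`x T₀ + y T₁` factors through `L(x, y) ⊗ I_{m12}`, where `L` is an `m × m` pencil of matrices.
Over `ℂ` such a pencil is singular at some point of `ℙ¹`, where the pencil of the tensor
therefore has rank at most `(m - 1) m12`. This is a closed condition, so it passes to the
closure `TNS`. The tensor `T` violates it: at every point of `ℙ¹` at most one diagonal entry
`x + b y` vanishes, and `n1, n2 ≥ (m - 1) m12 + 2`.
-/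

open MvPolynomial
open scoped Kronecker

namespace Matrix

theorem one_submatrix_mul_mul_transpose_one_submatrix {R l m n o : Type*} [CommSemiring R]
    [Fintype m] [Fintype n] [DecidableEq m] [DecidableEq n]
    (f : l → m) (g : o → n) (M : Matrix m n R) :
    (1 : Matrix m m R).submatrix f id * M * ((1 : Matrix n n R).submatrix g id)ᵀ
      = M.submatrix f g := by
  ext
  simp [mul_apply, one_apply]

theorem det_submatrix_eq_zero_of_rank_lt {K m n : Type*} [Field K] [Fintype n]
    {s : ℕ} (M : Matrix m n K) (hM : M.rank < s) (r : Fin s → m) (c : Fin s → n) :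
    (M.submatrix r c).det = 0 := by
  by_contra h
  have := M.rank_submatrix_le r c
  rw [rank_of_det_ne_zero h, Fintype.card_fin] at this
  omega

theorem rank_kronecker_one_add_card_le {K l n p : Type*} [Field K] [Fintype l] [Fintype n]
    [Fintype p] [DecidableEq p] (L : Matrix l n K) {v : n → K} (hv : v ≠ 0)
    (hLv : L *ᵥ v = 0) :
    (L ⊗ₖ (1 : Matrix p p K)).rank + Fintype.card p ≤ Fintype.card n * Fintype.card p := by
  classical
  -- `V ⊗ I` lies in the kernel of `L ⊗ I` and has full column rank `card p`,
  -- witnessed by its left inverse `W ⊗ I`.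
  obtain ⟨k, hk : v k ≠ 0⟩ := Function.ne_iff.mp hv
  set V : Matrix n Unit K := replicateCol Unit v
  set W : Matrix Unit n K := replicateRow Unit (Pi.single k (v k)⁻¹)
  have hWV : W * V = 1 := by
    ext
    simp [W, V, replicateRow, replicateCol, mul_apply, Pi.single_apply, inv_mul_cancel₀ hk]
  have hLV : L * V = 0 := by
    ext i
    simpa [V, mul_apply, mulVec, dotProduct] using congrFun hLv i
  have hrank : Fintype.card p ≤ (V ⊗ₖ (1 : Matrix p p K)).rank := by
    calc Fintype.card p = ((1 : Matrix (Unit × p) (Unit × p) K)).rank := by simp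
      _ = ((W ⊗ₖ (1 : Matrix p p K)) * (V ⊗ₖ (1 : Matrix p p K))).rank := by
          rw [← mul_kronecker_mul, hWV, Matrix.one_mul, one_kronecker_one]
      _ ≤ _ := rank_mul_le_right _ _
  have hzero : (L ⊗ₖ (1 : Matrix p p K)) * (V ⊗ₖ (1 : Matrix p p K)) = 0 := by
    rw [← mul_kronecker_mul, hLV, zero_kronecker]
  have := rank_add_rank_le_card_of_mul_eq_zero hzero
  simp only [Fintype.card_prod] at this
  omega

end Matrix

theorem Polynomial.squarefree_prod_X_add_C {K ι : Type*} [Field K] [Fintype ι] {c : ι → K}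
    (hc : Function.Injective c) : Squarefree (∏ u, (Polynomial.X + Polynomial.C (c u))) := by
  have hsep := Polynomial.separable_prod_X_sub_C_iff.mpr (neg_injective.comp hc)
  simp only [Function.comp_apply, Polynomial.C_neg, sub_neg_eq_add] at hsep
  exact hsep.squarefree

theorem MvPolynomial.not_sq_dvd_prod_X_add_C_mul_X {K ι : Type*} [Field K] [Fintype ι]
    {c : ι → K} (hc : Function.Injective c) (a b : K) :
    ¬ (C a * X 0 + C b * X 1) ^ 2 ∣ ∏ u, (X (0 : Fin 2) + C (c u) * X 1) := by
  intro hdvd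
  by_cases ha : a = 0
  · -- the square is then a multiple of `X 1`, which vanishes at `(1, 0)`
    simpa [ha] using map_dvd (MvPolynomial.eval (![1, 0] : Fin 2 → K)) hdvd
  · -- dehomogenize at `X 1 = 1`, where the product stays squarefree
    have hdvd' := map_dvd (MvPolynomial.aeval (![Polynomial.X, 1] : Fin 2 → Polynomial K)) hdvd
    simp only [map_pow, map_add, map_mul, map_prod, aeval_C, aeval_X, Polynomial.algebraMap_eq,
      Matrix.cons_val_zero, Matrix.cons_val_one, Matrix.cons_val_fin_one, mul_one] at hdvd'
    have hunit := Polynomial.squarefree_prod_X_add_C hc _ (by rwa [← sq])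
    have := Polynomial.natDegree_eq_zero_of_isUnit hunit
    rw [Polynomial.natDegree_linear ha] at this
    exact one_ne_zero this

def pencil {ι κ : Type*} (T : Fin 2 → ι → κ → ℂ) (p : ℂ × ℂ) : Matrix ι κ ℂ :=
  p.1 • Matrix.of (T 0) + p.2 • Matrix.of (T 1)

theorem Matrix.exists_mem_sphere_det_smul_add_smul_eq_zero {ι : Type*} [Fintype ι]
    [DecidableEq ι] [Nonempty ι] (L0 L1 : Matrix ι ι ℂ) :
    ∃ p ∈ Metric.sphere (0 : ℂ × ℂ) 1, (p.1 • L0 + p.2 • L1).det = 0 := by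
  obtain ⟨p, hp, hdet⟩ : ∃ p : ℂ × ℂ, p ≠ 0 ∧ (p.1 • L0 + p.2 • L1).det = 0 := by
    by_cases h1 : L1.det = 0
    · exact ⟨(0, 1), by simp, by simpa⟩
    · obtain ⟨μ, hμ⟩ := IsAlgClosed.exists_root (L1⁻¹ * L0).charpoly
        (by simp [Matrix.charpoly_degree_eq_dim])
      refine ⟨(-1, μ), by simp, ?_⟩
      have hfac : (-1 : ℂ) • L0 + μ • L1 = L1 * (Matrix.scalar ι μ - L1⁻¹ * L0) := by
        rw [mul_sub, ← mul_assoc, mul_nonsing_inv _ (isUnit_iff_ne_zero.mpr h1), one_mul]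
        ext
        simp [sub_eq_neg_add, mul_comm]
      rw [hfac, Matrix.det_mul, ← Matrix.eval_charpoly, hμ.eq_zero, mul_zero]
  refine ⟨(‖p‖⁻¹ : ℂ) • p, mem_sphere_zero_iff_norm.mpr (norm_smul_inv_norm hp), ?_⟩
  simp only [Prod.smul_fst, Prod.smul_snd, smul_eq_mul, mul_smul, ← smul_add]
  rw [Matrix.det_smul, hdet, mul_zero]

theorem pencil_eq_mul_kronecker_one_mul {m01 m12 m02 n1 n2 : ℕ}
    (X0 : Fin 2 → Fin m01 × Fin m02 → ℂ) (X1 : Fin n1 → Fin m01 × Fin m12 → ℂ)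
    (X2 : Fin n2 → Fin m12 × Fin m02 → ℂ) (T : Fin 2 → Fin n1 → Fin n2 → ℂ)
    (hT : ∀ a b c, T a b c = ∑ i : Fin m01, ∑ j : Fin m12, ∑ k : Fin m02,
      X0 a (i, k) * X1 b (i, j) * X2 c (j, k)) (p : ℂ × ℂ) :
    pencil T p = (Matrix.of fun b ij => X1 b ij : Matrix (Fin n1) (Fin m01 × Fin m12) ℂ)
      * (pencil (fun a i k => X0 a (i, k)) p ⊗ₖ (1 : Matrix (Fin m12) (Fin m12) ℂ))
      * (Matrix.of fun kj c => X2 c (kj.2, kj.1) : Matrix (Fin m02 × Fin m12) (Fin n2) ℂ) := by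
  ext b c
  simp only [pencil, Matrix.mul_apply, Fintype.sum_prod_type, Matrix.kroneckerMap_apply,
    Matrix.one_apply, Matrix.of_apply, Matrix.add_apply, Matrix.smul_apply, smul_eq_mul, hT]
  simp only [mul_ite, mul_one, mul_zero, Finset.sum_ite_eq', Finset.mem_univ, if_true,
    Finset.mul_sum, Finset.sum_mul, ← Finset.sum_add_distrib]
  rw [Finset.sum_comm_cycle]
  refine Finset.sum_congr rfl fun k _ => ?_
  rw [Finset.sum_comm]
  refine Finset.sum_congr rfl fun j _ => Finset.sum_congr rfl fun i _ => ?_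
  ring

/- The point of the pencil is taken on the unit sphere rather than in `ℙ¹` so that the locus is
a projection along a compact factor, hence closed. -/
def degeneratePencilLocus (s : ℕ) (ι κ : Type*) : Set (Fin 2 → ι → κ → ℂ) :=
  {T | ∃ p ∈ Metric.sphere (0 : ℂ × ℂ) 1,
    ∀ (r : Fin s → ι) (c : Fin s → κ), ((pencil T p).submatrix r c).det = 0}

theorem isClosed_degeneratePencilLocus (s : ℕ) (ι κ : Type*) :
    IsClosed (degeneratePencilLocus s ι κ) := by
  have himage : degeneratePencilLocus s ι κ = Prod.snd ''
      {q : Metric.sphere (0 : ℂ × ℂ) 1 × (Fin 2 → ι → κ → ℂ) |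
        ∀ (r : Fin s → ι) (c : Fin s → κ), ((pencil q.2 q.1).submatrix r c).det = 0} := by
    ext T
    simp [degeneratePencilLocus]
  rw [himage]
  refine isClosedMap_snd_of_compactSpace _ ?_
  simp only [Set.ofPred_forall]
  refine isClosed_iInter fun r => isClosed_iInter fun c => isClosed_eq ?_ continuous_const
  unfold pencil
  fun_prop

def diagPencil (n1 n2 : ℕ) : Fin 2 → Fin n1 → Fin n2 → ℂ :=
  fun a b c => if (b : ℕ) = c then (if a = 0 then 1 else (b : ℂ)) else 0

theorem pencil_diagPencil_submatrix {ι : Type*} [DecidableEq ι] {n1 n2 : ℕ} {f : ι → ℕ}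
    (hf : Function.Injective f) (h1 : ∀ u, f u < n1) (h2 : ∀ u, f u < n2) (p : ℂ × ℂ) :
    (pencil (diagPencil n1 n2) p).submatrix (fun u => ⟨f u, h1 u⟩) (fun u => ⟨f u, h2 u⟩)
      = Matrix.diagonal fun u => p.1 + p.2 * f u := by
  ext u v
  by_cases huv : u = v
  · subst huv
    simp [pencil, diagPencil]
  · simp [pencil, diagPencil, huv, hf.ne huv]

theorem pencilDet_diagPencil {n n1 n2 : ℕ} (h1 : n ≤ n1) (h2 : n ≤ n2) :
    pencilDet (diagPencil n1 n2) ((1 : Matrix (Fin n1) (Fin n1) ℂ).submatrix (Fin.castLE h1) id)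
      ((1 : Matrix (Fin n2) (Fin n2) ℂ).submatrix (Fin.castLE h2) id)
      = ∏ u : Fin n, (X 0 + C ((u : ℕ) : ℂ) * X 1) := by
  rw [pencilDet, ← Matrix.det_diagonal]
  congr 1
  ext u v
  simp only [Matrix.one_submatrix_mul_mul_transpose_one_submatrix]
  by_cases huv : u = v
  · subst huv
    simp [diagPencil, mul_comm]
  · simp [diagPencil, huv, Fin.val_ne_of_ne huv]

theorem tnsSet_subset_degeneratePencilLocus (m m12 n1 n2 : ℕ) :
    tnsSet (m + 1) m12 (m + 1) 2 n1 n2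
      ⊆ degeneratePencilLocus (m * m12 + 1) (Fin n1) (Fin n2) := by
  rintro T ⟨X0, X1, X2, hT⟩
  obtain ⟨p, hp, hdet⟩ := Matrix.exists_mem_sphere_det_smul_add_smul_eq_zero
    (Matrix.of fun i k => X0 0 (i, k)) (Matrix.of fun i k => X0 1 (i, k))
  obtain ⟨v, hv, hLv⟩ := Matrix.exists_mulVec_eq_zero_iff.mpr hdet
  have hkron := Matrix.rank_kronecker_one_add_card_le (p := Fin m12) _ hv hLv
  simp only [Fintype.card_fin] at hkron
  refine ⟨p, hp, Matrix.det_submatrix_eq_zero_of_rank_lt _ ?_⟩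
  rw [pencil_eq_mul_kronecker_one_mul X0 X1 X2 T hT p]
  calc _ ≤ _ := (Matrix.rank_mul_le_left _ _).trans (Matrix.rank_mul_le_right _ _)
    _ < m * m12 + 1 := by rw [pencil]; linarith

theorem exists_forall_ne_add_mul_ne_zero {ι : Type*} [Nonempty ι] {f : ι → ℂ}
    (hf : Function.Injective f) {p : ℂ × ℂ} (hp : p ≠ 0) :
    ∃ u₀, ∀ u ≠ u₀, p.1 + p.2 * f u ≠ 0 := by
  by_cases hroot : ∃ u₀, p.1 + p.2 * f u₀ = 0
  · obtain ⟨u₀, hu₀⟩ := hroot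
    refine ⟨u₀, fun u hu h => ?_⟩
    have hp2 : p.2 ≠ 0 := fun h2 => hp (Prod.ext (by simpa [h2] using hu₀) h2)
    exact hu (hf (mul_left_cancel₀ hp2 (by linear_combination h - hu₀)))
  · exact ⟨Classical.arbitrary ι, fun u _ => not_exists.mp hroot u⟩

theorem diagPencil_not_mem_degeneratePencilLocus {s n1 n2 : ℕ} (h1 : s < n1) (h2 : s < n2) :
    diagPencil n1 n2 ∉ degeneratePencilLocus s (Fin n1) (Fin n2) := by
  rintro ⟨p, hp, hminors⟩
  obtain ⟨u₀, hu₀⟩ :=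
    exists_forall_ne_add_mul_ne_zero (f := fun u : Fin (s + 1) => ((u : ℕ) : ℂ))
      (Nat.cast_injective.comp Fin.val_injective) (ne_zero_of_mem_unit_sphere ⟨p, hp⟩)
  have hf : Function.Injective fun u => (u₀.succAbove u : ℕ) :=
    Fin.val_injective.comp Fin.succAbove_right_injective
  have hminor :=
    hminors (fun u => ⟨u₀.succAbove u, by omega⟩) (fun u => ⟨u₀.succAbove u, by omega⟩)
  rw [pencil_diagPencil_submatrix hf, Matrix.det_diagonal] at hminor
  exact Finset.prod_ne_zero_iff.mpr (fun u _ => hu₀ _ (Fin.succAbove_ne u₀ u)) hminor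

/-- The coincident-root-locus equations are nontrivial: there is a tensor and a choice
of restriction matrices for which the binary determinant form admits no factorization
of coincident-root type `((m12−κ)^m, 1^{(m−1)κ})`; in particular the triangle tensor
network variety is a proper subset of the ambient space. -/
theorem tns_coincident_root_locus_nontrivial (m m12 k1 k2 κ n1 n2 n' : ℕ) (hm : 1 ≤ m)
    (hk21 : k2 ≤ k1) (hk1κ : k1 ≤ κ) (hκ : κ + 2 ≤ m12)
    (hn1 : n1 + k1 = m * m12) (hn2 : n2 + k2 = m * m12) (hn' : n' + κ = m * m12) :
    (∃ (T : Fin 2 → Fin n1 → Fin n2 → ℂ)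
        (X1 : Matrix (Fin n') (Fin n1) ℂ) (X2 : Matrix (Fin n') (Fin n2) ℂ),
      ¬ ∃ (ℓ : Fin m → MvPolynomial (Fin 2) ℂ) (g : MvPolynomial (Fin 2) ℂ),
        (∀ i, ∃ a b : ℂ,
          ℓ i = MvPolynomial.C a * MvPolynomial.X 0 + MvPolynomial.C b * MvPolynomial.X 1) ∧
        g.IsHomogeneous ((m - 1) * κ) ∧
        pencilDet T X1 X2 = (∏ i : Fin m, (ℓ i) ^ (m12 - κ)) * g) ∧
    TNS m m12 m 2 n1 n2 ≠ Set.univ := by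
  obtain ⟨m, rfl⟩ : ∃ m₀, m = m₀ + 1 := ⟨m - 1, by omega⟩
  rw [add_one_mul] at hn1 hn2 hn'
  have h1 : n' ≤ n1 := by omega
  have h2 : n' ≤ n2 := by omega
  refine ⟨⟨diagPencil n1 n2, (1 : Matrix (Fin n1) (Fin n1) ℂ).submatrix (Fin.castLE h1) id,
    (1 : Matrix (Fin n2) (Fin n2) ℂ).submatrix (Fin.castLE h2) id, ?_⟩, ?_⟩
  · rintro ⟨ℓ, g, hℓ, -, hfactor⟩
    obtain ⟨a, b, hab⟩ := hℓ 0
    have hinj : Function.Injective fun u : Fin n' => ((u : ℕ) : ℂ) :=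
      Nat.cast_injective.comp Fin.val_injective
    refine MvPolynomial.not_sq_dvd_prod_X_add_C_mul_X hinj a b ?_
    rw [← pencilDet_diagPencil h1 h2, hfactor, ← hab]
    exact ((pow_dvd_pow _ (by omega)).trans
      (Finset.dvd_prod_of_mem (fun i => ℓ i ^ (m12 - κ)) (Finset.mem_univ 0))).mul_right g
  · intro huniv
    have hTNS : TNS (m + 1) m12 (m + 1) 2 n1 n2
        ⊆ degeneratePencilLocus (m * m12 + 1) (Fin n1) (Fin n2) :=
      closure_minimal (tnsSet_subset_degeneratePencilLocus m m12 n1 n2)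
        (isClosed_degeneratePencilLocus _ _ _)
    exact diagPencil_not_mem_degeneratePencilLocus (by omega) (by omega)
      (hTNS (huniv ▸ Set.mem_univ _))
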